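/- arXiv:2103.08133 — 3 statements merged into one kernel-verified Lean document; each statement's English description precedes it below -/
import Mathlib

section
/- Let Σ be an alphabet and L_m a set of finite words over Σ. A set T ⊆ Σ^ω is markable with respect to L_m if and only if for every finite word t and every nonempty finite word u with t·u^ω ∈ T, the set {n ∈ ℕ | the length-n prefix of t·u^ω belongs to L_m} is infinite. (The forward direction follows by applying markability to the decompositions t·u^ω = (t·u^k)·u^ω for every k.) -/
variable {σ : Type*}

/-- The length-`n` prefix of an ω-word `w`: the finite word `w(0)w(1)⋯w(n-1)`. -/
def wPrefix (w : ℕ → σ) (n : ℕ) : List σ := (List.range n).map w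

/-- The ultimately periodic ω-word `t·u^ω` (for `u` nonempty): it starts with `t`
and then repeats `u` forever. -/
def catPow (t u : List σ) (hu : u ≠ []) : ℕ → σ :=
  fun n =>
    if h : n < t.length then t.get ⟨n, h⟩
    else u.get ⟨(n - t.length) % u.length, Nat.mod_lt _ (List.length_pos_iff.mpr hu)⟩

/-- `T` is markable with respect to the marker language `Lm`: for every `t` and
nonempty `u` with `t·u^ω ∈ T`, some length-`n` prefix of `t·u^ω` with `n ≥ |t|`
belongs to `Lm`. -/
def Markable (Lm : Set (List σ)) (T : Set (ℕ → σ)) : Prop :=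
  ∀ (t u : List σ) (hu : u ≠ []), catPow t u hu ∈ T →
    ∃ n, t.length ≤ n ∧ wPrefix (catPow t u hu) n ∈ Lm

/-- `pre(S)`: the set of all finite prefixes of members of the ω-language `S`. -/
def wPre (S : Set (ℕ → σ)) : Set (List σ) := {x | ∃ w ∈ S, ∃ n, x = wPrefix w n}

/-- The prefix-closure of a `*`-language `K`. -/
def precl (K : Set (List σ)) : Set (List σ) := {x | ∃ y ∈ K, x <+: y}

section catPow

variable (t u : List σ)

lemma catPow_append_self (hu : u ≠ []) : catPow (t ++ u) u hu = catPow t u hu := by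
  funext n
  simp only [catPow, List.get_eq_getElem, List.length_append]
  by_cases hn : n < t.length
  · rw [dif_pos hn, dif_pos (by omega), List.getElem_append_left hn]
  by_cases hn' : n < t.length + u.length
  · rw [dif_pos hn', dif_neg hn, List.getElem_append_right (by omega)]
    simp only [Nat.mod_eq_of_lt (show n - t.length < u.length by omega)]
  · rw [dif_neg hn', dif_neg hn]
    have hperiod : (n - t.length) % u.length = (n - (t.length + u.length)) % u.length := by
      rw [Nat.mod_eq_sub_mod (by omega), Nat.sub_sub]
    simp only [hperiod]

lemma catPow_append_flatten_replicate (hu : u ≠ []) (k : ℕ) :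
    catPow (t ++ (List.replicate k u).flatten) u hu = catPow t u hu := by
  induction k with
  | zero => simp
  | succ k ih =>
    rw [List.replicate_succ', List.flatten_append, List.flatten_singleton, ← List.append_assoc,
      catPow_append_self, ih]

lemma le_length_append_flatten_replicate (hu : u ≠ []) (k : ℕ) :
    k ≤ (t ++ (List.replicate k u).flatten).length := by
  have : 0 < u.length := List.length_pos_iff.mpr hu
  simp only [List.length_append, List.length_flatten, List.map_replicate, List.sum_replicate,
    smul_eq_mul]
  nlinarith

end catPow

theorem markable_iff_infinitely_often (Lm : Set (List σ)) (T : Set (ℕ → σ)) :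
    Markable Lm T ↔
      ∀ (t u : List σ) (hu : u ≠ []), catPow t u hu ∈ T →
        {n : ℕ | wPrefix (catPow t u hu) n ∈ Lm}.Infinite := by
  constructor
  · intro hM t u hu hT
    refine Set.infinite_of_forall_exists_gt fun N => ?_
    let t' := t ++ (List.replicate (N + 1) u).flatten
    have ht' : catPow t' u hu = catPow t u hu := catPow_append_flatten_replicate t u hu (N + 1)
    obtain ⟨n, hn, hmark⟩ := hM t' u hu (ht' ▸ hT)
    refine ⟨n, ht' ▸ hmark, ?_⟩
    calc N < N + 1 := N.lt_succ_self
      _ ≤ t'.length := le_length_append_flatten_replicate t u hu (N + 1)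
      _ ≤ n := hn
  · intro h t u hu hT
    obtain ⟨n, hn, hgt⟩ := (h t u hu hT).exists_gt t.length
    exact ⟨n, hgt.le, hn⟩
end

section
/- Let M be a DFA over alphabet Σ with accepting set Q_m, accepted language L_m(M), and Büchi-accepted set B(M). If T ⊆ Σ^ω is markable with respect to L_m(M), then every ultimately periodic member of T belongs to B(M): for all finite words t, u with u nonempty and t·u^ω ∈ T, the run of t·u^ω in M visits Q_m infinitely often. -/
variable {σ : Type*}

/-- The Büchi-accepted set of a DFA `M`: ω-words whose run visits `M.accept`
infinitely often. -/
def BuchiAcc {Q : Type*} (M : DFA σ Q) : Set (ℕ → σ) :=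
  {w | {n : ℕ | M.eval (wPrefix w n) ∈ M.accept}.Infinite}

/-! Absorbing `k` more periods into the prefix does not change the word: `t·u^ω = t'·u^ω` with
`t'` its prefix of length `|t| + k|u|`. Markability applied to `t'·u^ω` therefore yields an
accepted prefix of length at least `|t| + k|u|`, for every `k`. -/

@[simp]
lemma wPrefix_length (w : ℕ → σ) (n : ℕ) : (wPrefix w n).length = n := by
  simp [wPrefix]

lemma catPow_wPrefix_add_mul (t u : List σ) (hu : u ≠ []) (k : ℕ) :
    catPow (wPrefix (catPow t u hu) (t.length + k * u.length)) u hu = catPow t u hu := by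
  funext i
  by_cases hi : i < t.length + k * u.length
  · simp [catPow, wPrefix, hi]
  · have ht : ¬ i < t.length := by omega
    have hshift : i - t.length = i - (t.length + k * u.length) + k * u.length := by omega
    simp only [catPow, wPrefix_length, dif_neg hi, dif_neg ht, hshift, Nat.add_mul_mod_self_right]

lemma Markable.infinite_setOf_wPrefix_mem {Lm : Set (List σ)} {T : Set (ℕ → σ)}
    (hT : Markable Lm T) {t u : List σ} (hu : u ≠ []) (hmem : catPow t u hu ∈ T) :
    {n | wPrefix (catPow t u hu) n ∈ Lm}.Infinite := by
  refine Set.infinite_of_forall_exists_gt fun a => ?_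
  have hshift := catPow_wPrefix_add_mul t u hu (a + 1)
  obtain ⟨n, hn, hLm⟩ := hT _ u hu (hshift ▸ hmem)
  rw [wPrefix_length] at hn
  rw [hshift] at hLm
  refine ⟨n, hLm, ?_⟩
  have : 1 ≤ u.length := List.length_pos_iff.mpr hu
  nlinarith

theorem ultPer_mem_buchi_of_markable {Q : Type*} (M : DFA σ Q) (T : Set (ℕ → σ))
    (hT : Markable M.accepts T) :
    ∀ (t u : List σ) (hu : u ≠ []), catPow t u hu ∈ T →
      catPow t u hu ∈ BuchiAcc M :=
  fun _ _ hu hmem => hT.infinite_setOf_wPrefix_mem hu hmem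
end

section
/- Let Σ be an alphabet, L ⊆ Σ* a prefix-closed plant language, Σ_u ⊆ Σ a set of uncontrollable events, L_m ⊆ Σ* a marker language, E_s ⊆ Σ* a safety specification, and E_l ⊆ Σ^ω a legal specification. Let C be the collection of pairs (K, T) with K ⊆ Σ* and T ⊆ Σ^ω such that: K ⊆ E_s, K is *-controllable with respect to L and Σ_u, K is *-closed with respect to L_m, T ⊆ E_l, T is markable with respect to L_m, and K̄ = pre(T). Then C contains the pair (∅, ∅), C is closed under arbitrary (componentwise) unions of families of its members, and consequently C contains a unique supremal element, namely the componentwise union of all pairs in C. -/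
variable {σ : Type*}

/-- `K` is `*`-controllable with respect to plant language `L` and uncontrollable
events `Su`. -/
def StarControllable (L : Set (List σ)) (Su : Set σ) (K : Set (List σ)) : Prop :=
  ∀ s ∈ precl K, ∀ e ∈ Su, s ++ [e] ∈ L → s ++ [e] ∈ precl K

/-- `K` is `*`-closed with respect to the marker language `Lm`. -/
def StarClosed (Lm K : Set (List σ)) : Prop := K = precl K ∩ Lm

/-- The collection of pairs `(K, T)` satisfying: `K ⊆ Es`, `K` `*`-controllable
w.r.t. `L` and `Su`, `K` `*`-closed w.r.t. `Lm`, `T ⊆ El`, `T` markable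
w.r.t. `Lm`, and `K̄ = pre(T)`. -/
def CPairs (L : Set (List σ)) (Su : Set σ) (Lm Es : Set (List σ))
    (El : Set (ℕ → σ)) : Set (Set (List σ) × Set (ℕ → σ)) :=
  {p | p.1 ⊆ Es ∧ StarControllable L Su p.1 ∧ StarClosed Lm p.1 ∧
       p.2 ⊆ El ∧ Markable Lm p.2 ∧ precl p.1 = wPre p.2}

/-- Componentwise union of all pairs in `CPairs L Su Lm Es El`. -/
def supPair (L : Set (List σ)) (Su : Set σ) (Lm Es : Set (List σ))
    (El : Set (ℕ → σ)) : Set (List σ) × Set (ℕ → σ) :=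
  ({x | ∃ p ∈ CPairs L Su Lm Es El, x ∈ p.1},
   {w | ∃ p ∈ CPairs L Su Lm Es El, w ∈ p.2})

/-!
Each defining condition of `CPairs` is preserved by arbitrary unions: the prefix closure and
`pre` commute with unions, controllability and markability are local to the member containing
a given word, and `*`-closedness and the equation `K̄ = pre(T)` hold memberwise. The empty
family gives `(∅, ∅)`, and the family of all members gives `supPair`, which is then the greatest
member.
-/

section Unions

variable {ι : Sort*}

lemma precl_iUnion (K : ι → Set (List σ)) : precl (⋃ i, K i) = ⋃ i, precl (K i) := by
  ext x
  simp only [precl, Set.mem_iUnion, Set.mem_ofPred_eq]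
  exact ⟨fun ⟨y, ⟨i, hy⟩, hxy⟩ => ⟨i, y, hy, hxy⟩, fun ⟨i, y, hy, hxy⟩ => ⟨y, ⟨i, hy⟩, hxy⟩⟩

lemma wPre_iUnion (T : ι → Set (ℕ → σ)) : wPre (⋃ i, T i) = ⋃ i, wPre (T i) := by
  ext x
  simp only [wPre, Set.mem_iUnion, Set.mem_ofPred_eq]
  exact ⟨fun ⟨w, ⟨i, hw⟩, hx⟩ => ⟨i, w, hw, hx⟩, fun ⟨i, w, hw, hx⟩ => ⟨w, ⟨i, hw⟩, hx⟩⟩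

lemma StarControllable.iUnion {L : Set (List σ)} {Su : Set σ} {K : ι → Set (List σ)}
    (hK : ∀ i, StarControllable L Su (K i)) : StarControllable L Su (⋃ i, K i) := by
  intro s hs e he hse
  rw [precl_iUnion, Set.mem_iUnion] at hs ⊢
  obtain ⟨i, hi⟩ := hs
  exact ⟨i, hK i s hi e he hse⟩

lemma StarClosed.iUnion {Lm : Set (List σ)} {K : ι → Set (List σ)}
    (hK : ∀ i, StarClosed Lm (K i)) : StarClosed Lm (⋃ i, K i) := by
  rw [StarClosed, precl_iUnion, Set.iUnion_inter]
  exact Set.iUnion_congr hK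

lemma Markable.iUnion {Lm : Set (List σ)} {T : ι → Set (ℕ → σ)}
    (hT : ∀ i, Markable Lm (T i)) : Markable Lm (⋃ i, T i) := by
  intro t u hu htu
  obtain ⟨i, hi⟩ := Set.mem_iUnion.mp htu
  exact hT i t u hu hi

end Unions

section CPairs

variable {L : Set (List σ)} {Su : Set σ} {Lm Es : Set (List σ)} {El : Set (ℕ → σ)}

lemma iUnion_mem_cPairs {ι : Sort*} {F : ι → Set (List σ) × Set (ℕ → σ)}
    (hF : ∀ i, F i ∈ CPairs L Su Lm Es El) :
    ((⋃ i, (F i).1), (⋃ i, (F i).2)) ∈ CPairs L Su Lm Es El := by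
  choose hEs hctrl hclosed hEl hmark hpre using hF
  refine ⟨Set.iUnion_subset hEs, StarControllable.iUnion hctrl, StarClosed.iUnion hclosed,
    Set.iUnion_subset hEl, Markable.iUnion hmark, ?_⟩
  rw [precl_iUnion, wPre_iUnion]
  exact Set.iUnion_congr hpre

lemma empty_mem_cPairs :
    ((∅, ∅) : Set (List σ) × Set (ℕ → σ)) ∈ CPairs L Su Lm Es El := by
  simpa using iUnion_mem_cPairs (L := L) (Su := Su) (Lm := Lm) (Es := Es) (El := El)
    (F := (Empty.elim : Empty → Set (List σ) × Set (ℕ → σ))) Empty.rec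

lemma supPair_eq_iUnion :
    supPair L Su Lm Es El =
      ((⋃ p : CPairs L Su Lm Es El, (p.1 : Set (List σ) × Set (ℕ → σ)).1),
       (⋃ p : CPairs L Su Lm Es El, (p.1 : Set (List σ) × Set (ℕ → σ)).2)) := by
  ext x <;> simp [supPair]

lemma supPair_mem_cPairs : supPair L Su Lm Es El ∈ CPairs L Su Lm Es El := by
  rw [supPair_eq_iUnion]
  exact iUnion_mem_cPairs fun p => p.2

lemma subset_supPair {p : Set (List σ) × Set (ℕ → σ)} (hp : p ∈ CPairs L Su Lm Es El) :
    p.1 ⊆ (supPair L Su Lm Es El).1 ∧ p.2 ⊆ (supPair L Su Lm Es El).2 :=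
  ⟨fun _ hx => ⟨p, hp, hx⟩, fun _ hw => ⟨p, hp, hw⟩⟩

end CPairs

theorem cpairs_has_supremal_general (L : Set (List σ)) (Su : Set σ)
    (Lm Es : Set (List σ)) (El : Set (ℕ → σ)) :
    ((∅, ∅) : Set (List σ) × Set (ℕ → σ)) ∈ CPairs L Su Lm Es El ∧
    (∀ (A : Type*) (F : A → Set (List σ) × Set (ℕ → σ)),
      (∀ a, F a ∈ CPairs L Su Lm Es El) →
      ((⋃ a, (F a).1), (⋃ a, (F a).2)) ∈ CPairs L Su Lm Es El) ∧
    supPair L Su Lm Es El ∈ CPairs L Su Lm Es El ∧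
    (∀ p ∈ CPairs L Su Lm Es El,
      p.1 ⊆ (supPair L Su Lm Es El).1 ∧ p.2 ⊆ (supPair L Su Lm Es El).2) ∧
    (∀ q ∈ CPairs L Su Lm Es El,
      (∀ p ∈ CPairs L Su Lm Es El, p.1 ⊆ q.1 ∧ p.2 ⊆ q.2) →
      q = supPair L Su Lm Es El) := by
  refine ⟨empty_mem_cPairs, fun _ _ => iUnion_mem_cPairs, supPair_mem_cPairs,
    fun _ => subset_supPair, fun q hq hmax => ?_⟩
  obtain ⟨hq₁, hq₂⟩ := subset_supPair hq
  obtain ⟨hsup₁, hsup₂⟩ := hmax _ supPair_mem_cPairs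
  exact Prod.ext (hq₁.antisymm hsup₁) (hq₂.antisymm hsup₂)

theorem cpairs_has_supremal (L : Set (List σ)) (hL : precl L = L) (Su : Set σ)
    (Lm Es : Set (List σ)) (El : Set (ℕ → σ)) :
    ((∅, ∅) : Set (List σ) × Set (ℕ → σ)) ∈ CPairs L Su Lm Es El ∧
    (∀ (A : Type*) (F : A → Set (List σ) × Set (ℕ → σ)),
      (∀ a, F a ∈ CPairs L Su Lm Es El) →
      ((⋃ a, (F a).1), (⋃ a, (F a).2)) ∈ CPairs L Su Lm Es El) ∧
    supPair L Su Lm Es El ∈ CPairs L Su Lm Es El ∧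
    (∀ p ∈ CPairs L Su Lm Es El,
      p.1 ⊆ (supPair L Su Lm Es El).1 ∧ p.2 ⊆ (supPair L Su Lm Es El).2) ∧
    (∀ q ∈ CPairs L Su Lm Es El,
      (∀ p ∈ CPairs L Su Lm Es El, p.1 ⊆ q.1 ∧ p.2 ⊆ q.2) →
      q = supPair L Su Lm Es El) :=
  cpairs_has_supremal_general L Su Lm Es El
end
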